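/- arXiv:2402.16583 — 2 statements merged into one kernel-verified Lean document; each statement's English description precedes it below -/
import Mathlib

section
/- Let I = ⟨x_1x_2, x_2x_3, x_4x_5, x_5x_6⟩ ⊂ K[x_1,…,x_6] over a field K (the edge ideal of the disjoint union of two paths on three vertices). Then v(I^k) = 2k for all k ≥ 1; in particular v(I^k) ≠ 2k − 1 for every k ≥ 1. -/
open MvPolynomial

/-- A graded (homogeneous) ideal: one generated by homogeneous polynomials. -/
def IsHomogeneousIdeal {K : Type*} [Field K] {n : ℕ}
    (I : Ideal (MvPolynomial (Fin n) K)) : Prop :=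
  ∃ G : Set (MvPolynomial (Fin n) K),
    (∀ f ∈ G, ∃ d, f.IsHomogeneous d) ∧ I = Ideal.span G

/-- `Ass(I)`: the associated primes of `S/I`. -/
def Ass {K : Type*} [Field K] {n : ℕ} (I : Ideal (MvPolynomial (Fin n) K)) :
    Set (Ideal (MvPolynomial (Fin n) K)) :=
  associatedPrimes (MvPolynomial (Fin n) K) (MvPolynomial (Fin n) K ⧸ I)

/-- The local v-number `v_p(I)`. -/
noncomputable def vNumberAt {K : Type*} [Field K] {n : ℕ}
    (I p : Ideal (MvPolynomial (Fin n) K)) : ℕ :=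
  sInf {d | ∃ f : MvPolynomial (Fin n) K, f.IsHomogeneous d ∧
    I.colon (Ideal.span {f}) = p}

/-- The v-number `v(I)`. -/
noncomputable def vNumber {K : Type*} [Field K] {n : ℕ}
    (I : Ideal (MvPolynomial (Fin n) K)) : ℕ :=
  sInf {d | ∃ f : MvPolynomial (Fin n) K, ∃ p ∈ Ass I, f.IsHomogeneous d ∧
    I.colon (Ideal.span {f}) = p}

/-- `α(J)`: the least degree of a nonzero element of `J`. -/
noncomputable def alphaNum {K : Type*} [Field K] {n : ℕ}
    (J : Ideal (MvPolynomial (Fin n) K)) : ℕ :=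
  sInf {d | ∃ f ∈ J, f ≠ 0 ∧ f.totalDegree = d}

/-- `c(I) = max{α(p) : p ∈ Ass(I)}`. -/
noncomputable def cNum {K : Type*} [Field K] {n : ℕ}
    (I : Ideal (MvPolynomial (Fin n) K)) : ℕ :=
  sSup (alphaNum '' Ass I)

/-!
Write `μ(m) = min(m₁, m₀ + m₂) + min(m₄, m₃ + m₅)` for an exponent vector `m`. Since `μ` is
superadditive and equals `1` on the four generators, every monomial occurring in an element of
`I^k` has `μ ≥ k`.

Upper bound: for `f = x₀^(k-1) x₁^k x₄` of degree `2k`, the monomials `g` with `g f ∈ I^k` are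
exactly those divisible by one of `x₀, x₂, x₃, x₅`, so `(I^k : f)` is the prime `(x₀, x₂, x₃, x₅)`.

Lower bound: if `(I^k : f) = p` is prime then `I ⊆ p`, so `p` contains some `x_α` with
`α ∈ {0, 1}` and some `x_β` with `β ∈ {3, 4}`. For a monomial `m` of `f`, both `μ(m + e_α) ≥ k`
and `μ(m + e_β) ≥ k`; each gives `2k ≤ deg m + 1`, and a parity argument excludes equality in both.
-/

namespace MvPolynomial

section Superlevel

variable {σ R : Type*} [CommSemiring R] (μ : (σ →₀ ℕ) → ℕ)

noncomputable def superlevelIdeal (k : ℕ) : Ideal (MvPolynomial σ R) :=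
  Ideal.span ((fun m => monomial m 1) '' {m | k ≤ μ m})

variable {μ} (hμ : ∀ a b, μ a + μ b ≤ μ (a + b))
include hμ

theorem mem_superlevelIdeal_iff {k : ℕ} {f : MvPolynomial σ R} :
    f ∈ superlevelIdeal μ k ↔ ∀ m ∈ f.support, k ≤ μ m := by
  rw [superlevelIdeal, mem_ideal_span_monomial_image]
  refine forall₂_congr fun m _ => ⟨?_, fun hm => ⟨m, hm, le_rfl⟩⟩
  rintro ⟨m', hm', hle⟩
  obtain ⟨c, rfl⟩ := le_iff_exists_add.1 hle
  exact hm'.trans (le_of_add_le_left (hμ m' c))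

theorem superlevelIdeal_mul_le (k l : ℕ) :
    superlevelIdeal (R := R) μ k * superlevelIdeal μ l ≤ superlevelIdeal μ (k + l) := by
  rw [superlevelIdeal, superlevelIdeal, Ideal.span_mul_span']
  refine Ideal.span_mono ?_
  rintro _ ⟨_, ⟨a, ha, rfl⟩, _, ⟨b, hb, rfl⟩, rfl⟩
  exact ⟨a + b, (add_le_add ha hb).trans (hμ a b), by simp only [monomial_mul, one_mul]⟩

theorem pow_le_superlevelIdeal {I : Ideal (MvPolynomial σ R)} (hI : I ≤ superlevelIdeal μ 1)
    (k : ℕ) : I ^ k ≤ superlevelIdeal μ k := by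
  induction k with
  | zero =>
    rw [pow_zero, Ideal.one_eq_top, top_le_iff, Ideal.eq_top_iff_one, one_def]
    exact Ideal.subset_span ⟨0, Nat.zero_le _, rfl⟩
  | succ k ih => exact (Ideal.mul_mono ih hI).trans (superlevelIdeal_mul_le hμ k 1)

end Superlevel

theorem isPrime_span_X_image {σ R : Type*} [CommRing R] [IsDomain R] (s : Set σ) :
    (Ideal.span (X '' s : Set (MvPolynomial σ R))).IsPrime := by
  classical
  set J : Ideal (MvPolynomial σ R) := Ideal.span (X '' s)
  let ψ : MvPolynomial σ R →ₐ[R] MvPolynomial σ R := aeval fun i => if i ∈ s then 0 else X i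
  have hψ : (Ideal.Quotient.mkₐ R J).comp ψ = Ideal.Quotient.mkₐ R J := by
    refine algHom_ext fun i => ?_
    by_cases hi : i ∈ s
    · have hXi : (X i : MvPolynomial σ R) ∈ J := Ideal.subset_span (Set.mem_image_of_mem X hi)
      simpa [ψ, hi, eq_comm (a := (0 : _ ⧸ J)), Ideal.Quotient.eq_zero_iff_mem] using hXi
    · simp [ψ, hi]
  have hker : RingHom.ker ψ = J := by
    refine le_antisymm (fun g hg => ?_) (Ideal.span_le.2 ?_)
    · rw [← Ideal.Quotient.eq_zero_iff_mem, ← Ideal.Quotient.mkₐ_eq_mk R, ← hψ,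
        AlgHom.comp_apply, (RingHom.mem_ker).1 hg, map_zero]
    · rintro _ ⟨i, hi, rfl⟩
      simp [ψ, hi]
  rw [← hker]
  exact RingHom.ker_isPrime ψ

end MvPolynomial

theorem isAssociatedPrime_of_colon_span_singleton_eq {R : Type*} [CommRing R] {I p : Ideal R}
    {f : R} (hp : p.IsPrime) (h : I.colon (Ideal.span {f}) = p) : IsAssociatedPrime p (R ⧸ I) := by
  refine ⟨hp, Ideal.Quotient.mk I f, ?_⟩
  suffices Submodule.colon ⊥ {Ideal.Quotient.mk I f} = p by rw [this, hp.radical]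
  ext r
  rw [Submodule.mem_colon_singleton, Submodule.mem_bot, ← h, Ideal.mem_colon_span_singleton,
    ← Ideal.Quotient.eq_zero_iff_mem]
  rfl

noncomputable abbrev twoPathsIdeal (K : Type*) [Field K] : Ideal (MvPolynomial (Fin 6) K) :=
  Ideal.span {X 0 * X 1, X 1 * X 2, X 3 * X 4, X 4 * X 5}

/-- `min (m 1) (m 0 + m 2)` is the largest `s` with `x^m ∈ (x₀x₁, x₁x₂)^s`. -/
def twoPathsWeight (m : Fin 6 →₀ ℕ) : ℕ :=
  min (m 1) (m 0 + m 2) + min (m 4) (m 3 + m 5)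

theorem twoPathsWeight_add_le (a b : Fin 6 →₀ ℕ) :
    twoPathsWeight a + twoPathsWeight b ≤ twoPathsWeight (a + b) := by
  simp only [twoPathsWeight, Finsupp.add_apply]
  omega

noncomputable def witnessExp (j : ℕ) : Fin 6 →₀ ℕ :=
  Finsupp.single 0 j + Finsupp.single 1 (j + 1) + Finsupp.single 4 1

section TwoPaths

variable {K : Type*} [Field K]

theorem twoPathsIdeal_le_superlevelIdeal :
    twoPathsIdeal K ≤ superlevelIdeal twoPathsWeight 1 := by
  rw [Ideal.span_le]
  have hgen : ∀ i j : Fin 6, 1 ≤ twoPathsWeight (Finsupp.single i 1 + Finsupp.single j 1) →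
      (X i * X j : MvPolynomial (Fin 6) K) ∈ superlevelIdeal twoPathsWeight 1 := fun i j h =>
    Ideal.subset_span ⟨_, h, by simp only [X, monomial_mul, one_mul]⟩
  rintro _ (rfl | rfl | rfl | rfl) <;>
    exact hgen _ _ (by simp [twoPathsWeight])

theorem le_twoPathsWeight_of_mem_pow {k : ℕ} {f : MvPolynomial (Fin 6) K}
    (hf : f ∈ twoPathsIdeal K ^ k) {m : Fin 6 →₀ ℕ} (hm : m ∈ f.support) :
    k ≤ twoPathsWeight m :=
  (mem_superlevelIdeal_iff twoPathsWeight_add_le).1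
    (pow_le_superlevelIdeal twoPathsWeight_add_le twoPathsIdeal_le_superlevelIdeal k hf) m hm

theorem monomial_witnessExp (j : ℕ) :
    (monomial (witnessExp j) 1 : MvPolynomial (Fin 6) K) = X 0 ^ j * X 1 ^ (j + 1) * X 4 := by
  rw [X_pow_eq_monomial, X_pow_eq_monomial, ← pow_one (X 4), X_pow_eq_monomial, monomial_mul,
    monomial_mul, one_mul, one_mul, witnessExp]

theorem isHomogeneous_monomial_witnessExp (j : ℕ) :
    (monomial (witnessExp j) (1 : K)).IsHomogeneous (2 * (j + 1)) := by
  refine isHomogeneous_monomial _ ?_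
  simp [witnessExp, Finsupp.degree_eq_sum, Fin.sum_univ_six]
  ring

theorem X_mul_monomial_witnessExp_mem {i : Fin 6} (hi : i ∈ ({0, 2, 3, 5} : Set (Fin 6)))
    (j : ℕ) : X i * monomial (witnessExp j) (1 : K) ∈ twoPathsIdeal K ^ (j + 1) := by
  have hmem : ∀ g ∈ twoPathsIdeal K, ∀ h : MvPolynomial (Fin 6) K,
      (X 0 * X 1) ^ j * g * h ∈ twoPathsIdeal K ^ (j + 1) := fun g hg h =>
    Ideal.mul_mem_right h _ (pow_succ (twoPathsIdeal K) j ▸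
      Ideal.mul_mem_mul (Ideal.pow_mem_pow (Ideal.subset_span (by simp)) j) hg)
  rw [monomial_witnessExp]
  rcases hi with rfl | rfl | rfl | rfl
  · convert hmem (X 0 * X 1) (Ideal.subset_span (by simp)) (X 4) using 1; ring
  · convert hmem (X 1 * X 2) (Ideal.subset_span (by simp)) (X 4) using 1; ring
  · convert hmem (X 3 * X 4) (Ideal.subset_span (by simp)) (X 1) using 1; ring
  · convert hmem (X 4 * X 5) (Ideal.subset_span (by simp)) (X 1) using 1; ring

theorem colon_monomial_witnessExp (j : ℕ) :
    (twoPathsIdeal K ^ (j + 1)).colon (Ideal.span {monomial (witnessExp j) (1 : K)}) =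
      Ideal.span (X '' {0, 2, 3, 5}) := by
  refine le_antisymm (fun g hg => ?_) (Ideal.span_le.2 ?_)
  · rw [Ideal.mem_colon_span_singleton] at hg
    rw [mem_ideal_span_X_image]
    intro m hm
    by_contra! hm0
    -- without `x₀, x₂, x₃, x₅`, the monomial `x^m` times the witness has weight only `j`
    have hweight := le_twoPathsWeight_of_mem_pow hg (m := m + witnessExp j)
      (by rwa [mem_support_iff, coeff_mul_monomial, mul_one, ← mem_support_iff])
    simp only [Set.mem_insert_iff, Set.mem_singleton_iff, forall_eq_or_imp, forall_eq] at hm0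
    simp [twoPathsWeight, witnessExp, hm0] at hweight
  · rintro _ ⟨i, hi, rfl⟩
    exact Ideal.mem_colon_span_singleton.2 (X_mul_monomial_witnessExp_mem hi j)

/-- Each hypothesis gives `2k ≤ deg m + 1`; in the case of equality, the first forces the degree
of `m` in `x₀, x₁, x₂` to be odd, the second forces it to be even. -/
theorem two_mul_le_degree_of_le_twoPathsWeight {k : ℕ} {m : Fin 6 →₀ ℕ} {α β : Fin 6}
    (hα : α = 0 ∨ α = 1) (hβ : β = 3 ∨ β = 4) (hmα : k ≤ twoPathsWeight (m + Finsupp.single α 1))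
    (hmβ : k ≤ twoPathsWeight (m + Finsupp.single β 1)) : 2 * k ≤ m.degree := by
  rw [Finsupp.degree_eq_sum, Fin.sum_univ_six]
  rcases hα with rfl | rfl <;> rcases hβ with rfl | rfl <;>
    simp [twoPathsWeight] at hmα hmβ <;> omega

theorem two_mul_le_of_colon_eq_isPrime {k d : ℕ} {f : MvPolynomial (Fin 6) K}
    {p : Ideal (MvPolynomial (Fin 6) K)} (hp : p.IsPrime) (hf : f.IsHomogeneous d)
    (hcol : (twoPathsIdeal K ^ k).colon (Ideal.span {f}) = p) : 2 * k ≤ d := by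
  have hf0 : f ≠ 0 := by
    rintro rfl
    rw [Ideal.span_singleton_eq_bot.2 rfl, Submodule.colon_bot] at hcol
    exact hp.ne_top hcol.symm
  have hXp : ∀ a b : Fin 6, X a * X b ∈ twoPathsIdeal K → X a ∈ p ∨ X b ∈ p := fun a b h =>
    hp.mem_or_mem <| hp.mem_of_pow_mem k <| hcol ▸ Ideal.le_colon (Ideal.pow_mem_pow h k)
  obtain ⟨α, hα, hXα⟩ : ∃ α : Fin 6, (α = 0 ∨ α = 1) ∧ X α ∈ p := by
    rcases hXp 0 1 (Ideal.subset_span (by simp)) with h | h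
    exacts [⟨0, by simp, h⟩, ⟨1, by simp, h⟩]
  obtain ⟨β, hβ, hXβ⟩ : ∃ β : Fin 6, (β = 3 ∨ β = 4) ∧ X β ∈ p := by
    rcases hXp 3 4 (Ideal.subset_span (by simp)) with h | h
    exacts [⟨3, by simp, h⟩, ⟨4, by simp, h⟩]
  obtain ⟨m, hm⟩ := support_nonempty.2 hf0
  have hweight : ∀ i, X i ∈ p → k ≤ twoPathsWeight (m + Finsupp.single i 1) := fun i hi =>
    le_twoPathsWeight_of_mem_pow
      (mul_comm (X i) f ▸ Ideal.mem_colon_span_singleton.1 (hcol ▸ hi))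
      (by rwa [mem_support_iff, coeff_mul_X, ← mem_support_iff])
  have hdeg : m.degree = d := by
    rw [Finsupp.degree_eq_weight_one]
    exact hf (mem_support_iff.1 hm)
  exact hdeg ▸ two_mul_le_degree_of_le_twoPathsWeight hα hβ (hweight α hXα) (hweight β hXβ)

end TwoPaths

/-- For `I = ⟨x_1x_2, x_2x_3, x_4x_5, x_5x_6⟩ ⊂ K[x_1,…,x_6]` (the edge
ideal of the disjoint union of two paths on three vertices), `v(I^k) = 2k` for all
`k ≥ 1`; in particular `v(I^k) ≠ 2k − 1` for every `k ≥ 1`. -/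
theorem stmt18 {K : Type*} [Field K]
    (I : Ideal (MvPolynomial (Fin 6) K))
    (hI : I = Ideal.span
      {(X 0 : MvPolynomial (Fin 6) K) * X 1, (X 1 : MvPolynomial (Fin 6) K) * X 2,
       (X 3 : MvPolynomial (Fin 6) K) * X 4, (X 4 : MvPolynomial (Fin 6) K) * X 5}) :
    ∀ k : ℕ, 1 ≤ k → (vNumber (I ^ k) : ℤ) = 2 * k ∧
      (vNumber (I ^ k) : ℤ) ≠ 2 * k - 1 := by
  intro k hk
  obtain rfl : I = twoPathsIdeal K := hI
  obtain ⟨j, rfl⟩ : ∃ j, k = j + 1 := ⟨k - 1, by omega⟩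
  have hwitness : ∃ f : MvPolynomial (Fin 6) K, ∃ p ∈ Ass (twoPathsIdeal K ^ (j + 1)),
      f.IsHomogeneous (2 * (j + 1)) ∧ (twoPathsIdeal K ^ (j + 1)).colon (Ideal.span {f}) = p :=
    ⟨_, _, isAssociatedPrime_of_colon_span_singleton_eq (isPrime_span_X_image _)
      (colon_monomial_witnessExp j), isHomogeneous_monomial_witnessExp j,
      colon_monomial_witnessExp j⟩
  have hv : vNumber (twoPathsIdeal K ^ (j + 1)) = 2 * (j + 1) := by
    refine le_antisymm (Nat.sInf_le hwitness) (le_csInf ⟨_, hwitness⟩ ?_)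
    rintro d ⟨f, p, hp, hf, hcol⟩
    exact two_mul_le_of_colon_eq_isPrime hp.isPrime hf hcol
  omega
end

section
/- Let I = ⟨x_1x_2x_3, x_3x_4x_5, x_5x_6x_7⟩ ⊂ K[x_1,…,x_7] over a field K. Then v(I^k) ≠ 3k − 1 for every k ≥ 1; that is, for every k ≥ 1 there is no monomial f of degree 3k − 1 and prime p ∈ Ass(I^k) with (I^k : f) = p, so the v-number of I^k never attains the lower bound α(I)·k − 1. -/
open MvPolynomial

namespace Stmt19Aux

open Pointwise

noncomputable def E1 : Fin 7 →₀ ℕ := Finsupp.single 0 1 + Finsupp.single 1 1 + Finsupp.single 2 1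
noncomputable def E2 : Fin 7 →₀ ℕ := Finsupp.single 2 1 + Finsupp.single 3 1 + Finsupp.single 4 1
noncomputable def E3 : Fin 7 →₀ ℕ := Finsupp.single 4 1 + Finsupp.single 5 1 + Finsupp.single 6 1

def T (k : ℕ) : Set (Fin 7 →₀ ℕ) :=
  {t | ∃ a b c : ℕ, a + b + c = k ∧ t = a • E1 + b • E2 + c • E3}

lemma degree_eq_sum (d : Fin 7 →₀ ℕ) : Finsupp.degree d = ∑ i : Fin 7, d i :=
  Finset.sum_subset (Finset.subset_univ _)
    (fun _ _ hi => Finsupp.notMem_support_iff.mp hi)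

lemma sum_T (a b c : ℕ) :
    ∑ i : Fin 7, (a • E1 + b • E2 + c • E3) i = 3 * (a + b + c) := by
  simp [E1, E2, E3, Fin.sum_univ_seven, Finsupp.single_apply]
  ring

lemma contra {a b c a' b' c' : ℕ} {u v : Fin 7} (huv : u ≠ v)
    (h : a • E1 + b • E2 + c • E3 + Finsupp.single v 1
       = a' • E1 + b' • E2 + c' • E3 + Finsupp.single u 1) : False := by
  have H0 := DFunLike.congr_fun h 0
  have H1 := DFunLike.congr_fun h 1
  have H2 := DFunLike.congr_fun h 2
  have H3 := DFunLike.congr_fun h 3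
  have H4 := DFunLike.congr_fun h 4
  have H5 := DFunLike.congr_fun h 5
  have H6 := DFunLike.congr_fun h 6
  simp only [E1, E2, E3, Finsupp.coe_add, Pi.add_apply, Finsupp.smul_apply,
    Finsupp.single_apply, smul_eq_mul] at H0 H1 H2 H3 H4 H5 H6
  fin_cases u <;> fin_cases v <;>
    first
      | exact huv rfl
      | (simp (config := { decide := true }) only [if_true, if_false] at H0 H1 H2 H3 H4 H5 H6;
         omega)

lemma hgen {K : Type*} [Field K] :
    ({(X 0 : MvPolynomial (Fin 7) K) * X 1 * X 2,
      (X 2 : MvPolynomial (Fin 7) K) * X 3 * X 4,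
      (X 4 : MvPolynomial (Fin 7) K) * X 5 * X 6} : Set (MvPolynomial (Fin 7) K))
    = (fun t => monomial t (1 : K)) '' {E1, E2, E3} := by
  rw [Set.image_insert_eq, Set.image_insert_eq, Set.image_singleton]
  have h1 : (X 0 : MvPolynomial (Fin 7) K) * X 1 * X 2 = monomial E1 1 := by
    simp [X, monomial_mul, E1]
  have h2 : (X 2 : MvPolynomial (Fin 7) K) * X 3 * X 4 = monomial E2 1 := by
    simp [X, monomial_mul, E2]
  have h3 : (X 4 : MvPolynomial (Fin 7) K) * X 5 * X 6 = monomial E3 1 := by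
    simp [X, monomial_mul, E3]
  rw [h1, h2, h3]

lemma span_pow_le {K : Type*} [Field K] (k : ℕ) :
    Ideal.span ((fun t => monomial t (1 : K)) '' {E1, E2, E3}) ^ k ≤
    Ideal.span ((fun t => monomial t (1 : K)) '' T k) := by
  induction k with
  | zero =>
    rw [pow_zero, Ideal.one_eq_top]
    refine top_le_iff.mpr ((Ideal.eq_top_iff_one _).mpr (Ideal.subset_span ?_))
    exact ⟨0, ⟨0, 0, 0, by simp, by simp⟩, by simp⟩
  | succ k ih =>
    rw [pow_succ]
    calc Ideal.span ((fun t => monomial t (1 : K)) '' {E1, E2, E3}) ^ k *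
          Ideal.span ((fun t => monomial t (1 : K)) '' {E1, E2, E3})
        ≤ Ideal.span ((fun t => monomial t (1 : K)) '' T k) *
          Ideal.span ((fun t => monomial t (1 : K)) '' {E1, E2, E3}) :=
          Ideal.mul_mono ih le_rfl
      _ = Ideal.span (((fun t => monomial t (1 : K)) '' T k) *
            ((fun t => monomial t (1 : K)) '' {E1, E2, E3})) := Ideal.span_mul_span' _ _
      _ ≤ Ideal.span ((fun t => monomial t (1 : K)) '' T (k + 1)) := by
        apply Ideal.span_mono
        rintro x hx
        rw [Set.mem_mul] at hx
        obtain ⟨y, ⟨t, ⟨a, b, c, habc, rfl⟩, rfl⟩, z, ⟨e, he, rfl⟩, rfl⟩ := hx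
        rcases he with rfl | rfl | rfl
        · exact ⟨a • E1 + b • E2 + c • E3 + E1, ⟨a + 1, b, c, by omega,
            by rw [succ_nsmul]; abel⟩, by rw [monomial_mul, one_mul]⟩
        · exact ⟨a • E1 + b • E2 + c • E3 + E2, ⟨a, b + 1, c, by omega,
            by rw [succ_nsmul]; abel⟩, by rw [monomial_mul, one_mul]⟩
        · exact ⟨a • E1 + b • E2 + c • E3 + E3, ⟨a, b, c + 1, by omega,
            by rw [succ_nsmul]; abel⟩, by rw [monomial_mul, one_mul]⟩

lemma key {K : Type*} [Field K] {k : ℕ} (hk : 1 ≤ k) {f : MvPolynomial (Fin 7) K}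
    (hf : f.IsHomogeneous (3 * k - 1)) {p : Ideal (MvPolynomial (Fin 7) K)} (hp : p.IsPrime)
    (hc : ((Ideal.span ({(X 0 : MvPolynomial (Fin 7) K) * X 1 * X 2,
        (X 2 : MvPolynomial (Fin 7) K) * X 3 * X 4,
        (X 4 : MvPolynomial (Fin 7) K) * X 5 * X 6} :
        Set (MvPolynomial (Fin 7) K))) ^ k).colon (Ideal.span {f}) = p) : False := by
  rw [hgen] at hc
  set J : Ideal (MvPolynomial (Fin 7) K) :=
    Ideal.span ((fun t => monomial t (1 : K)) '' {E1, E2, E3}) ^ k with hJ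
  -- f ≠ 0
  have hf0 : f ≠ 0 := by
    rintro rfl
    exact hp.ne_top (hc ▸ (Ideal.eq_top_iff_one _).mpr
      (Ideal.mem_colon_span_singleton.mpr (by simp)))
  -- J ≤ p
  have hIp : J ≤ p := fun x hx =>
    hc ▸ Ideal.mem_colon_span_singleton.mpr (Ideal.mul_mem_right f _ hx)
  have hvar : ∀ t ∈ ({E1, E2, E3} : Set (Fin 7 →₀ ℕ)), (monomial t (1 : K)) ∈ p := by
    intro t ht
    exact hp.mem_of_pow_mem k (hIp (Ideal.pow_mem_pow
      (Ideal.subset_span (Set.mem_image_of_mem _ ht)) k))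
  -- m in support of f
  have hne : f.support ≠ ∅ := fun h => hf0 (MvPolynomial.support_eq_empty.mp h)
  obtain ⟨m, hm⟩ := Finset.nonempty_iff_ne_empty.mpr hne
  have hmdeg : ∑ i : Fin 7, m i = 3 * k - 1 := by
    rw [← degree_eq_sum, Finsupp.degree_eq_weight_one]
    exact hf (MvPolynomial.mem_support_iff.mp hm)
  -- main step, applied to any variable in p
  have step : ∀ u : Fin 7, X u ∈ p →
      ∃ a b c : ℕ, a + b + c = k ∧
        a • E1 + b • E2 + c • E3 = Finsupp.single u 1 + m := by
    intro u hup
    have hmem : X u * f ∈ J := Ideal.mem_colon_span_singleton.mp (hc ▸ hup)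
    have hmem' : X u * f ∈ Ideal.span ((fun t => monomial t (1 : K)) '' T k) :=
      span_pow_le k hmem
    have hsupp : (Finsupp.single u 1 + m) ∈ (X u * f).support := by
      rw [MvPolynomial.mem_support_iff, MvPolynomial.coeff_X_mul]
      exact MvPolynomial.mem_support_iff.mp hm
    obtain ⟨t, ht, hle⟩ := mem_ideal_span_monomial_image.mp hmem' _ hsupp
    obtain ⟨a, b, c, habc, rfl⟩ := ht
    refine ⟨a, b, c, habc, ?_⟩
    have hsum1 : ∑ i : Fin 7, (a • E1 + b • E2 + c • E3) i = 3 * k := by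
      rw [sum_T]; omega
    have hsum2 : ∑ i : Fin 7, ((Finsupp.single u 1 + m : Fin 7 →₀ ℕ)) i = 3 * k := by
      have hs : ∑ i : Fin 7, ((Finsupp.single u 1 : Fin 7 →₀ ℕ)) i = 1 := by
        simp [Finsupp.single_apply]
      calc ∑ i : Fin 7, ((Finsupp.single u 1 + m : Fin 7 →₀ ℕ)) i
          = ∑ i : Fin 7, (((Finsupp.single u 1 : Fin 7 →₀ ℕ)) i + m i) := by
            apply Finset.sum_congr rfl; intro i _; rfl
        _ = (∑ i : Fin 7, ((Finsupp.single u 1 : Fin 7 →₀ ℕ)) i) + ∑ i : Fin 7, m i :=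
            Finset.sum_add_distrib
        _ = 3 * k := by omega
    have := (Finset.sum_eq_sum_iff_of_le
      (fun i _ => Finsupp.le_def.mp hle i)).mp (hsum1.trans hsum2.symm)
    ext i
    exact this i (Finset.mem_univ i)
  -- find variables from the first and third generators
  have h1 : ∃ u : Fin 7, (u = 0 ∨ u = 1 ∨ u = 2) ∧ X u ∈ p := by
    have hh := hvar E1 (by simp)
    rw [show (monomial E1 (1 : K)) = X 0 * X 1 * X 2 by simp [X, monomial_mul, E1]] at hh
    rcases hp.mem_or_mem hh with h | h
    · rcases hp.mem_or_mem h with h | h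
      · exact ⟨0, Or.inl rfl, h⟩
      · exact ⟨1, Or.inr (Or.inl rfl), h⟩
    · exact ⟨2, Or.inr (Or.inr rfl), h⟩
  have h3 : ∃ w : Fin 7, (w = 4 ∨ w = 5 ∨ w = 6) ∧ X w ∈ p := by
    have hh := hvar E3 (by simp)
    rw [show (monomial E3 (1 : K)) = X 4 * X 5 * X 6 by simp [X, monomial_mul, E3]] at hh
    rcases hp.mem_or_mem hh with h | h
    · rcases hp.mem_or_mem h with h | h
      · exact ⟨4, Or.inl rfl, h⟩
      · exact ⟨5, Or.inr (Or.inl rfl), h⟩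
    · exact ⟨6, Or.inr (Or.inr rfl), h⟩
  obtain ⟨u, hu17, hup⟩ := h1
  obtain ⟨w, hw17, hwp⟩ := h3
  have huw : u ≠ w := by
    rcases hu17 with rfl | rfl | rfl <;> rcases hw17 with rfl | rfl | rfl <;> decide
  obtain ⟨a, b, c, habc, heq⟩ := step u hup
  obtain ⟨a', b', c', habc', heq'⟩ := step w hwp
  exact contra (a := a) (b := b) (c := c) (a' := a') (b' := b') (c' := c') huw
    (by rw [heq, heq']; abel)

end Stmt19Aux

/-- For `I = ⟨x_1x_2x_3, x_3x_4x_5, x_5x_6x_7⟩ ⊂ K[x_1,…,x_7]`, one has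
`v(I^k) ≠ 3k − 1` for every `k ≥ 1`; indeed there exist no monomial `f` of degree
`3k − 1` and `p ∈ Ass(I^k)` with `(I^k : f) = p`, so the v-number of `I^k` never
attains the lower bound `α(I)·k − 1`. -/
theorem stmt19 {K : Type*} [Field K]
    (I : Ideal (MvPolynomial (Fin 7) K))
    (hI : I = Ideal.span
      {(X 0 : MvPolynomial (Fin 7) K) * X 1 * X 2,
       (X 2 : MvPolynomial (Fin 7) K) * X 3 * X 4,
       (X 4 : MvPolynomial (Fin 7) K) * X 5 * X 6}) :
    ∀ k : ℕ, 1 ≤ k →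
      (vNumber (I ^ k) : ℤ) ≠ 3 * k - 1 ∧
      ¬∃ (s : Fin 7 →₀ ℕ) (p : Ideal (MvPolynomial (Fin 7) K)),
        p ∈ Ass (I ^ k) ∧
        (monomial s (1 : K) : MvPolynomial (Fin 7) K).totalDegree = 3 * k - 1 ∧
        (I ^ k).colon (Ideal.span {(monomial s (1 : K) : MvPolynomial (Fin 7) K)}) = p := by
  intro k hk
  subst hI
  have key' : ∀ (f : MvPolynomial (Fin 7) K) (p : Ideal (MvPolynomial (Fin 7) K)),
      p ∈ Ass ((Ideal.span
        {(X 0 : MvPolynomial (Fin 7) K) * X 1 * X 2,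
         (X 2 : MvPolynomial (Fin 7) K) * X 3 * X 4,
         (X 4 : MvPolynomial (Fin 7) K) * X 5 * X 6}) ^ k) →
      f.IsHomogeneous (3 * k - 1) →
      ((Ideal.span
        {(X 0 : MvPolynomial (Fin 7) K) * X 1 * X 2,
         (X 2 : MvPolynomial (Fin 7) K) * X 3 * X 4,
         (X 4 : MvPolynomial (Fin 7) K) * X 5 * X 6}) ^ k).colon (Ideal.span {f}) = p →
      False := by
    intro f p hp hf hcol
    exact Stmt19Aux.key hk hf hp.1 hcol
  constructor
  · intro hEq
    have h2 : vNumber ((Ideal.span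
        {(X 0 : MvPolynomial (Fin 7) K) * X 1 * X 2,
         (X 2 : MvPolynomial (Fin 7) K) * X 3 * X 4,
         (X 4 : MvPolynomial (Fin 7) K) * X 5 * X 6}) ^ k) = 3 * k - 1 := by omega
    by_cases hS : {d | ∃ f : MvPolynomial (Fin 7) K, ∃ p ∈ Ass ((Ideal.span
        {(X 0 : MvPolynomial (Fin 7) K) * X 1 * X 2,
         (X 2 : MvPolynomial (Fin 7) K) * X 3 * X 4,
         (X 4 : MvPolynomial (Fin 7) K) * X 5 * X 6}) ^ k), f.IsHomogeneous d ∧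
        ((Ideal.span
        {(X 0 : MvPolynomial (Fin 7) K) * X 1 * X 2,
         (X 2 : MvPolynomial (Fin 7) K) * X 3 * X 4,
         (X 4 : MvPolynomial (Fin 7) K) * X 5 * X 6}) ^ k).colon (Ideal.span {f}) = p}.Nonempty
    · have hmem := Nat.sInf_mem hS
      rw [show sInf _ = vNumber ((Ideal.span
        {(X 0 : MvPolynomial (Fin 7) K) * X 1 * X 2,
         (X 2 : MvPolynomial (Fin 7) K) * X 3 * X 4,
         (X 4 : MvPolynomial (Fin 7) K) * X 5 * X 6}) ^ k) from rfl, h2] at hmem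
      obtain ⟨f, p, hp, hf, hcol⟩ := hmem
      exact key' f p hp hf hcol
    · rw [Set.not_nonempty_iff_eq_empty] at hS
      have : vNumber ((Ideal.span
        {(X 0 : MvPolynomial (Fin 7) K) * X 1 * X 2,
         (X 2 : MvPolynomial (Fin 7) K) * X 3 * X 4,
         (X 4 : MvPolynomial (Fin 7) K) * X 5 * X 6}) ^ k) = 0 := by
        rw [show vNumber _ = sInf _ from rfl, hS, Nat.sInf_empty]
      omega
  · rintro ⟨s, p, hp, hdeg, hcol⟩
    have hmono : (monomial s (1 : K) : MvPolynomial (Fin 7) K).IsHomogeneous (3 * k - 1) := by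
      apply isHomogeneous_monomial
      rw [totalDegree_monomial _ (one_ne_zero)] at hdeg
      exact hdeg
    exact key' _ p hp hmono hcol
end
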